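/- Let n ≥ 2 be an integer and k a field. Let π : k[X_{x_1}, X_{y_1}, X_{z_1}, …, X_{x_n}, X_{y_n}, X_{z_n}] → k[t_v : v ∈ V(𝒢_n)] be the k-algebra homomorphism sending X_{x_i} ↦ t_w·t_{u_i^{(1)}}, X_{y_i} ↦ t_w·t_{u_i^{(2)}}, and X_{z_i} ↦ t_{u_i^{(1)}}·t_{u_i^{(2)}}. Then the kernel of π (the toric ideal I_{𝒢_n}) equals the ideal generated by the binomials X_{x_i}X_{y_i}X_{z_j} − X_{z_i}X_{x_j}X_{y_j} for 1 ≤ i < j ≤ n. -/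

import Mathlib

open MvPolynomial

/-- Edges of the graph `𝒢ₙ`: `(i,0) = xᵢ`, `(i,1) = yᵢ`, `(i,2) = zᵢ`. -/
abbrev EdgeVar (n : ℕ) := Fin n × Fin 3

/-- Vertices of the graph `𝒢ₙ`: `none = w`, `some (i,0) = uᵢ⁽¹⁾`, `some (i,1) = uᵢ⁽²⁾`. -/
abbrev VertexVar (n : ℕ) := Option (Fin n × Fin 2)

/-- The `k`-algebra homomorphism sending each edge variable to the product of the
vertex variables of its endpoints: `xᵢ ↦ t_w t_{uᵢ⁽¹⁾}`, `yᵢ ↦ t_w t_{uᵢ⁽²⁾}`,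
`zᵢ ↦ t_{uᵢ⁽¹⁾} t_{uᵢ⁽²⁾}`. -/
noncomputable def piMap (n : ℕ) (k : Type*) [CommRing k] :
    MvPolynomial (EdgeVar n) k →ₐ[k] MvPolynomial (VertexVar n) k :=
  aeval (fun e : EdgeVar n =>
    if e.2 = 0 then X none * X (some (e.1, 0))
    else if e.2 = 1 then X none * X (some (e.1, 1))
    else X (some (e.1, 0)) * X (some (e.1, 1)))

namespace ToricAux

open Finsupp

variable {n : ℕ}

noncomputable def eps (n : ℕ) (e : EdgeVar n) : VertexVar n →₀ ℕ :=
  if e.2 = 0 then single none 1 + single (some (e.1, 0)) 1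
  else if e.2 = 1 then single none 1 + single (some (e.1, 1)) 1
  else single (some (e.1, 0)) 1 + single (some (e.1, 1)) 1

noncomputable def phi (m : EdgeVar n →₀ ℕ) : VertexVar n →₀ ℕ :=
  ∑ e : EdgeVar n, m e • eps n e

/-- normal-form exponent vectors -/
def Normal (m : EdgeVar n →₀ ℕ) : Prop :=
  ∀ i j : Fin n, i < j → m (i, 0) = 0 ∨ m (i, 1) = 0 ∨ m (j, 2) = 0

lemma phi_add (a b : EdgeVar n →₀ ℕ) : phi (a + b) = phi a + phi b := by
  simp [phi, add_smul, Finset.sum_add_distrib]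

lemma phi_single (e : EdgeVar n) (t : ℕ) : phi (single e t) = t • eps n e := by
  rw [phi]
  rw [Finset.sum_eq_single e]
  · simp
  · intro b _ hb
    rw [single_apply, if_neg (by exact fun h => hb h.symm), zero_smul]
  · simp

lemma eps_apply_w (e : EdgeVar n) : eps n e none = if e.2 = 2 then 0 else 1 := by
  rcases e with ⟨i, c⟩
  fin_cases c <;> simp [eps]

lemma eps_apply_u1 (e : EdgeVar n) (i : Fin n) :
    eps n e (some (i, 0)) = if e.1 = i ∧ e.2 ≠ 1 then 1 else 0 := by
  rcases e with ⟨a, c⟩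
  fin_cases c <;> simp [eps, single_apply] <;> split <;> simp_all

lemma eps_apply_u2 (e : EdgeVar n) (i : Fin n) :
    eps n e (some (i, 1)) = if e.1 = i ∧ e.2 ≠ 0 then 1 else 0 := by
  rcases e with ⟨a, c⟩
  fin_cases c <;> simp [eps, single_apply] <;> split <;> simp_all

lemma phi_apply_w (m : EdgeVar n →₀ ℕ) :
    phi m none = ∑ i : Fin n, (m (i, 0) + m (i, 1)) := by
  rw [phi, Finsupp.finset_sum_apply, Fintype.sum_prod_type]
  refine Finset.sum_congr rfl fun i _ => ?_
  rw [Fin.sum_univ_three]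
  simp [eps_apply_w]

lemma phi_apply_u1 (m : EdgeVar n →₀ ℕ) (i : Fin n) :
    phi m (some (i, 0)) = m (i, 0) + m (i, 2) := by
  rw [phi, Finsupp.finset_sum_apply, Fintype.sum_prod_type]
  rw [Finset.sum_eq_single i]
  · rw [Fin.sum_univ_three]
    simp [eps_apply_u1]
  · intro b _ hb
    rw [Fin.sum_univ_three]
    simp [eps_apply_u1, hb]
  · simp

lemma phi_apply_u2 (m : EdgeVar n →₀ ℕ) (i : Fin n) :
    phi m (some (i, 1)) = m (i, 1) + m (i, 2) := by
  rw [phi, Finsupp.finset_sum_apply, Fintype.sum_prod_type]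
  rw [Finset.sum_eq_single i]
  · rw [Fin.sum_univ_three]
    simp [eps_apply_u2]
  · intro b _ hb
    rw [Fin.sum_univ_three]
    simp [eps_apply_u2, hb]
  · simp

lemma uniq_aux (κ c c' : Fin n → ℕ) (hc' : ∀ i, c' i ≤ κ i)
    (hN : ∀ i j : Fin n, i < j → c i = κ i ∨ c j = 0)
    (hsum : ∑ i, c i = ∑ i, c' i) (i : Fin n)
    (hpre : ∀ k, k < i → c k = c' k) : ¬ c i < c' i := by
  intro hlt
  have hsplit : ∀ f : Fin n → ℕ, ∑ x, f x =
      (∑ x ∈ Finset.univ.filter (· < i), f x) + (f i +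
        ∑ x ∈ Finset.univ.filter (i < ·), f x) := by
    intro f
    rw [← Finset.sum_filter_add_sum_filter_not Finset.univ (· < i) f]
    congr 1
    have : Finset.univ.filter (fun x : Fin n => ¬ x < i) =
        insert i (Finset.univ.filter (i < ·)) := by
      ext x
      simp only [Finset.mem_filter, Finset.mem_univ, true_and, Finset.mem_insert, not_lt]
      constructor
      · intro h
        rcases eq_or_lt_of_le h with h | h
        · exact Or.inl h.symm
        · exact Or.inr h
      · rintro (rfl | h)
        · exact le_refl _
        · exact le_of_lt h
    rw [this, Finset.sum_insert (by simp)]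
  rw [hsplit c, hsplit c'] at hsum
  have hpre' : (∑ x ∈ Finset.univ.filter (· < i), c x) =
      ∑ x ∈ Finset.univ.filter (· < i), c' x := by
    refine Finset.sum_congr rfl fun x hx => ?_
    exact hpre x (by simpa using hx)
  have htail : (∑ x ∈ Finset.univ.filter (i < ·), c' x) <
      ∑ x ∈ Finset.univ.filter (i < ·), c x := by omega
  obtain ⟨j, hj, hjlt⟩ := Finset.exists_lt_of_sum_lt htail
  have hij : i < j := by simpa using hj
  rcases hN i j hij with h | h
  · have := hc' i; omega
  · omega

lemma uniq (κ c c' : Fin n → ℕ) (hc : ∀ i, c i ≤ κ i) (hc' : ∀ i, c' i ≤ κ i)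
    (hN : ∀ i j : Fin n, i < j → c i = κ i ∨ c j = 0)
    (hN' : ∀ i j : Fin n, i < j → c' i = κ i ∨ c' j = 0)
    (hsum : ∑ i, c i = ∑ i, c' i) : c = c' := by
  by_contra h
  have hne : (Finset.univ.filter (fun i : Fin n => c i ≠ c' i)).Nonempty := by
    rw [Finset.filter_nonempty_iff]
    by_contra h2
    push_neg at h2
    exact h (funext fun i => h2 i (Finset.mem_univ i))
  set S := Finset.univ.filter (fun i : Fin n => c i ≠ c' i) with hS
  have hi : S.min' hne ∈ S := S.min'_mem hne
  set i := S.min' hne with hidef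
  have hine : c i ≠ c' i := by simpa [hS] using hi
  have hpre : ∀ k, k < i → c k = c' k := by
    intro k hk
    by_contra hkne
    have : i ≤ k := S.min'_le k (by simpa [hS] using hkne)
    omega
  rcases lt_trichotomy (c i) (c' i) with h1 | h1 | h1
  · exact uniq_aux κ c c' hc' hN hsum i hpre h1
  · exact hine h1
  · exact uniq_aux κ c' c hc hN' hsum.symm i (fun k hk => (hpre k hk).symm) h1

lemma normal_inj {m m' : EdgeVar n →₀ ℕ} (hm : Normal m) (hm' : Normal m')
    (hphi : phi m = phi m') : m = m' := by
  have hd : ∀ i : Fin n, m (i, 0) + m (i, 2) = m' (i, 0) + m' (i, 2) := fun i => by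
    rw [← phi_apply_u1, ← phi_apply_u1, hphi]
  have he : ∀ i : Fin n, m (i, 1) + m (i, 2) = m' (i, 1) + m' (i, 2) := fun i => by
    rw [← phi_apply_u2, ← phi_apply_u2, hphi]
  have hw : (∑ i : Fin n, (m (i, 0) + m (i, 1))) = ∑ i : Fin n, (m' (i, 0) + m' (i, 1)) := by
    rw [← phi_apply_w, ← phi_apply_w, hphi]
  have h2 : (∑ i : Fin n, ((m (i, 0) + m (i, 1)) + 2 * m (i, 2))) =
      ∑ i : Fin n, ((m' (i, 0) + m' (i, 1)) + 2 * m' (i, 2)) := by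
    refine Finset.sum_congr rfl fun i _ => ?_
    have := hd i; have := he i; omega
  simp only [Finset.sum_add_distrib, ← Finset.mul_sum] at h2 hw
  have hsum : (∑ i : Fin n, m (i, 2)) = ∑ i : Fin n, m' (i, 2) := by omega
  have hκ : ∀ i : Fin n, min (m (i, 0) + m (i, 2)) (m (i, 1) + m (i, 2)) =
      min (m' (i, 0) + m' (i, 2)) (m' (i, 1) + m' (i, 2)) := fun i => by
    rw [hd i, he i]
  have hNgen : ∀ a : EdgeVar n →₀ ℕ, Normal a → ∀ i j : Fin n, i < j →
      a (i, 2) = min (a (i, 0) + a (i, 2)) (a (i, 1) + a (i, 2)) ∨ a (j, 2) = 0 := by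
    intro a ha i j hij
    rcases ha i j hij with h3 | h3 | h3
    · left; rw [h3, zero_add]; exact (min_eq_left (Nat.le_add_left _ _)).symm
    · left; rw [h3, zero_add]; exact (min_eq_right (Nat.le_add_left _ _)).symm
    · right; exact h3
  have hc := uniq (fun i => min (m (i, 0) + m (i, 2)) (m (i, 1) + m (i, 2)))
    (fun i => m (i, 2)) (fun i => m' (i, 2))
    (fun i => le_min (Nat.le_add_left _ _) (Nat.le_add_left _ _))
    (fun i => by
      show m' (i, 2) ≤ min (m (i, 0) + m (i, 2)) (m (i, 1) + m (i, 2))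
      rw [hκ i]
      exact le_min (Nat.le_add_left _ _) (Nat.le_add_left _ _))
    (hNgen m hm)
    (fun i j hij => by
      show m' (i, 2) = min (m (i, 0) + m (i, 2)) (m (i, 1) + m (i, 2)) ∨ m' (j, 2) = 0
      rw [hκ i]
      exact hNgen m' hm' i j hij)
    hsum
  have hc2 : ∀ i : Fin n, m (i, 2) = m' (i, 2) := fun i => congrFun hc i
  ext e
  rcases e with ⟨i, c⟩
  fin_cases c
  · show m (i, 0) = m' (i, 0)
    have := hd i; have := hc2 i; omega
  · show m (i, 1) = m' (i, 1)
    have := he i; have := hc2 i; omega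
  · show m (i, 2) = m' (i, 2)
    exact hc2 i

open Classical in
noncomputable def g (n : ℕ) (v : VertexVar n →₀ ℕ) : EdgeVar n →₀ ℕ :=
  if h : ∃ m : EdgeVar n →₀ ℕ, Normal m ∧ phi m = v then h.choose else 0

lemma g_normal_eq {m : EdgeVar n →₀ ℕ} (hm : Normal m) : g n (phi m) = m := by
  have h : ∃ m' : EdgeVar n →₀ ℕ, Normal m' ∧ phi m' = phi m := ⟨m, hm, rfl⟩
  rw [g, dif_pos h]
  exact normal_inj h.choose_spec.1 hm h.choose_spec.2

/-- weight used for termination of the reduction -/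
def mu (m : EdgeVar n →₀ ℕ) : ℕ :=
  ∑ e : EdgeVar n, (if e.2 = 2 then (e.1 : ℕ) * m e else 0)

lemma mu_add (a b : EdgeVar n →₀ ℕ) : mu (a + b) = mu a + mu b := by
  rw [mu, mu, mu, ← Finset.sum_add_distrib]
  refine Finset.sum_congr rfl fun e _ => ?_
  split <;> simp [Finsupp.add_apply, Nat.mul_add]

lemma mu_single (a : EdgeVar n) (t : ℕ) :
    mu (single a t) = if a.2 = 2 then (a.1 : ℕ) * t else 0 := by
  rw [mu, Finset.sum_eq_single a]
  · simp
  · intro b _ hb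
    have hab : a ≠ b := fun h => hb h.symm
    simp [single_apply, hab]
  · simp

section Poly

variable (k : Type*) [CommRing k]

lemma pi_X (e : EdgeVar n) :
    piMap n k (X e) = monomial (eps n e) 1 := by
  have hXX : ∀ a b : VertexVar n, (X a * X b : MvPolynomial (VertexVar n) k) =
      monomial (Finsupp.single a 1 + Finsupp.single b 1) 1 := by
    intro a b
    rw [X, X, monomial_mul, one_mul]
  rcases e with ⟨i, c⟩
  fin_cases c <;>
  · rw [piMap, aeval_X, eps]
    norm_num [Fin.ext_iff]
    rw [hXX]

lemma pi_monomial_one (m : EdgeVar n →₀ ℕ) :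
    piMap n k (monomial m 1) = monomial (phi m) 1 := by
  induction m using Finsupp.induction with
  | zero =>
    have h0 : phi (0 : EdgeVar n →₀ ℕ) = 0 := by simp [phi]
    rw [h0]
    simp [monomial_zero']
  | single_add e t f hef ht ih =>
    have h1 : (monomial (single e t + f) (1 : k)) = monomial (single e t) 1 * monomial f 1 := by
      rw [monomial_mul, one_mul]
    have h2 : (monomial (single e t) (1 : k)) = X e ^ t := X_pow_eq_monomial.symm
    rw [h1, h2, map_mul, map_pow, pi_X, ih, monomial_pow, one_pow, monomial_mul, one_mul,
      phi_add, phi_single]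

lemma pi_monomial (m : EdgeVar n →₀ ℕ) (c : k) :
    piMap n k (monomial m c) = monomial (phi m) c := by
  have h1 : (monomial m c : MvPolynomial (EdgeVar n) k) = C c * monomial m 1 := by
    rw [C_mul_monomial, mul_one]
  have h2 : (monomial (phi m) c : MvPolynomial (VertexVar n) k) = C c * monomial (phi m) 1 := by
    rw [C_mul_monomial, mul_one]
  rw [h1, h2, map_mul, pi_monomial_one]
  congr 1
  simp [piMap]

/-- the generating set of binomials -/
def genSet (n : ℕ) : Set (MvPolynomial (EdgeVar n) k) :=
  {f : MvPolynomial (EdgeVar n) k | ∃ i j : Fin n, i < j ∧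
    f = X (i, 0) * X (i, 1) * X (j, 2) - X (i, 2) * X (j, 0) * X (j, 1)}

lemma core (N : ℕ) : ∀ m : EdgeVar n →₀ ℕ, mu m ≤ N →
    (monomial m 1 - monomial (g n (phi m)) 1 : MvPolynomial (EdgeVar n) k) ∈
      Ideal.span (genSet k n) := by
  induction N using Nat.strong_induction_on with
  | _ N ih =>
    intro m hm
    by_cases hnorm : Normal m
    · rw [g_normal_eq hnorm, sub_self]
      exact Ideal.zero_mem _
    · rw [Normal] at hnorm
      push_neg at hnorm
      obtain ⟨i, j, hij, h0, h1, h2⟩ := hnorm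
      have hij' : i ≠ j := ne_of_lt hij
      set s : EdgeVar n →₀ ℕ := single (i, 0) 1 + single (i, 1) 1 + single (j, 2) 1 with hs
      set t : EdgeVar n →₀ ℕ := single (i, 2) 1 + single (j, 0) 1 + single (j, 1) 1 with ht
      have hsm : s ≤ m := by
        rw [Finsupp.le_def]
        intro e
        rcases e with ⟨a, c⟩
        have h0' : 1 ≤ m (i, 0) := Nat.one_le_iff_ne_zero.mpr h0
        have h1' : 1 ≤ m (i, 1) := Nat.one_le_iff_ne_zero.mpr h1
        have h2' : 1 ≤ m (j, 2) := Nat.one_le_iff_ne_zero.mpr h2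
        rw [hs]
        fin_cases c <;>
          simp only [Finsupp.add_apply, single_apply, Prod.mk.injEq, Fin.ext_iff] <;>
          norm_num <;>
          split_ifs <;>
          first
            | positivity
            | (rename_i hval
               have hia := Fin.eq_of_val_eq hval
               subst hia
               first
                 | exact h0'
                 | exact h1'
                 | exact h2')
      have hb : m = (m - s) + s := (tsub_add_cancel_of_le hsm).symm
      set b : EdgeVar n →₀ ℕ := m - s with hbdef
      set m₂ : EdgeVar n →₀ ℕ := b + t with hm₂
      have hphis : phi (s : EdgeVar n →₀ ℕ) = phi t := by
        rw [hs, ht, phi_add, phi_add, phi_add, phi_add, phi_single, phi_single, phi_single,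
          phi_single, phi_single, phi_single]
        have e1 : eps n ((i, 0) : EdgeVar n) = single none 1 + single (some (i, 0)) 1 := rfl
        have e2 : eps n ((i, 1) : EdgeVar n) = single none 1 + single (some (i, 1)) 1 := rfl
        have e3 : eps n ((j, 2) : EdgeVar n) = single (some (j, 0)) 1 + single (some (j, 1)) 1 := rfl
        have e4 : eps n ((i, 2) : EdgeVar n) = single (some (i, 0)) 1 + single (some (i, 1)) 1 := rfl
        have e5 : eps n ((j, 0) : EdgeVar n) = single none 1 + single (some (j, 0)) 1 := rfl
        have e6 : eps n ((j, 1) : EdgeVar n) = single none 1 + single (some (j, 1)) 1 := rfl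
        rw [e1, e2, e3, e4, e5, e6]
        simp only [one_smul]
        abel
      have hphi : phi m = phi m₂ := by
        rw [hb, hm₂, phi_add b s, phi_add b t, hphis]
      have hXs : (X (i, 0) * X (i, 1) * X (j, 2) : MvPolynomial (EdgeVar n) k) =
          monomial s 1 := by
        rw [hs, X, X, X, monomial_mul, monomial_mul, one_mul, one_mul]
      have hXt : (X (i, 2) * X (j, 0) * X (j, 1) : MvPolynomial (EdgeVar n) k) =
          monomial t 1 := by
        rw [ht, X, X, X, monomial_mul, monomial_mul, one_mul, one_mul]
      have hfac : (monomial m 1 - monomial m₂ 1 : MvPolynomial (EdgeVar n) k) =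
          monomial b 1 * (X (i, 0) * X (i, 1) * X (j, 2) -
            (X (i, 2) * X (j, 0) * X (j, 1))) := by
        rw [mul_sub, hXs, hXt, monomial_mul, monomial_mul, hm₂]
        nth_rewrite 1 [hb]
        norm_num
      have hmem : (monomial m 1 - monomial m₂ 1 : MvPolynomial (EdgeVar n) k) ∈
          Ideal.span (genSet k n) := by
        rw [hfac]
        exact Ideal.mul_mem_left _ _ (Ideal.subset_span ⟨i, j, hij, rfl⟩)
      have hmus : mu s = (j : ℕ) := by
        rw [hs, mu_add, mu_add, mu_single, mu_single, mu_single]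
        norm_num [Fin.ext_iff]
      have hmut : mu t = (i : ℕ) := by
        rw [ht, mu_add, mu_add, mu_single, mu_single, mu_single]
        norm_num [Fin.ext_iff]
      have hmu2 : mu m₂ < mu m := by
        have h3 : mu m = mu b + mu s := by rw [hb, mu_add]
        have h4 : mu m₂ = mu b + mu t := by rw [hm₂, mu_add]
        have h5 : (i : ℕ) < (j : ℕ) := hij
        omega
      have hrec := ih (mu m₂) (lt_of_lt_of_le hmu2 hm) m₂ le_rfl
      have heq : (monomial m 1 - monomial (g n (phi m)) 1 : MvPolynomial (EdgeVar n) k) =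
          (monomial m 1 - monomial m₂ 1) + (monomial m₂ 1 - monomial (g n (phi m₂)) 1) := by
        rw [hphi]; ring
      rw [heq]
      exact Ideal.add_mem _ hmem hrec

lemma binomial_mem {m m' : EdgeVar n →₀ ℕ} (hphi : phi m = phi m') :
    (monomial m 1 - monomial m' 1 : MvPolynomial (EdgeVar n) k) ∈
      Ideal.span (genSet k n) := by
  have h1 := core k (mu m) m le_rfl
  have h2 := core k (mu m') m' le_rfl
  rw [hphi] at h1
  have h3 := Ideal.sub_mem _ h1 h2
  simpa using h3

lemma ker_le (N : ℕ) : ∀ p : MvPolynomial (EdgeVar n) k, p.support.card ≤ N →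
    piMap n k p = 0 → p ∈ Ideal.span (genSet k n) := by
  induction N using Nat.strong_induction_on with
  | _ N ih =>
    intro p hcard hker
    by_cases hp0 : p = 0
    · rw [hp0]; exact Ideal.zero_mem _
    obtain ⟨m, hm⟩ := (MvPolynomial.support_nonempty).mpr hp0
    have hcoeffm : coeff m p ≠ 0 := MvPolynomial.mem_support_iff.mp hm
    have hsum : (∑ m'' ∈ p.support, if phi m'' = phi m then coeff m'' p else 0) = 0 := by
      have h1 : coeff (phi m) (piMap n k p) = 0 := by rw [hker]; exact coeff_zero _
      have h2 : piMap n k p = ∑ m'' ∈ p.support, monomial (phi m'') (coeff m'' p) := by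
        conv_lhs => rw [p.as_sum]
        rw [map_sum]
        exact Finset.sum_congr rfl fun m'' _ => pi_monomial k m'' _
      rw [h2, MvPolynomial.coeff_sum] at h1
      simpa [MvPolynomial.coeff_monomial] using h1
    have hex : ∃ m' ∈ p.support, m' ≠ m ∧ phi m' = phi m := by
      by_contra hcon
      push_neg at hcon
      rw [Finset.sum_eq_single m] at hsum
      · rw [if_pos rfl] at hsum
        exact hcoeffm hsum
      · intro b hb hbm
        rw [if_neg (hcon b hb hbm)]
      · intro hnm
        exact absurd hm hnm
    obtain ⟨m', hm's, hm'ne, hm'phi⟩ := hex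
    set c := coeff m p with hc
    set q : MvPolynomial (EdgeVar n) k := p - C c * (monomial m 1 - monomial m' 1) with hq
    have hbk : piMap n k (monomial m 1 - monomial m' 1) = 0 := by
      rw [map_sub, pi_monomial, pi_monomial, hm'phi, sub_self]
    have hqker : piMap n k q = 0 := by
      rw [hq, map_sub, map_mul, hbk, mul_zero, hker, sub_zero]
    have hqsub : q.support ⊆ p.support.erase m := by
      intro e he
      rw [Finset.mem_erase]
      have hcq : coeff e q ≠ 0 := MvPolynomial.mem_support_iff.mp he
      constructor
      · rintro rfl
        apply hcq
        have hm'e : m' ≠ e := hm'ne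
        rw [hq]
        simp [MvPolynomial.coeff_sub, MvPolynomial.coeff_C_mul, MvPolynomial.coeff_monomial,
          hm'e, hc]
      · by_contra hep
        apply hcq
        have h1 : coeff e p = 0 := MvPolynomial.notMem_support_iff.mp hep
        have hem : m ≠ e := fun h => hep (h ▸ hm)
        have hem' : m' ≠ e := fun h => hep (h ▸ hm's)
        rw [hq]
        simp [MvPolynomial.coeff_sub, MvPolynomial.coeff_C_mul, MvPolynomial.coeff_monomial,
          hem, hem', h1]
    have hcardp : 0 < p.support.card := Finset.card_pos.mpr ⟨m, hm⟩
    have hcard2 : q.support.card < N := by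
      have h1 : q.support.card ≤ (p.support.erase m).card := Finset.card_le_card hqsub
      have h2 : (p.support.erase m).card < p.support.card := Finset.card_erase_lt_of_mem hm
      omega
    have hq' := ih q.support.card hcard2 q le_rfl hqker
    have hpq : p = q + C c * (monomial m 1 - monomial m' 1) := by rw [hq]; ring
    rw [hpq]
    exact Ideal.add_mem _ hq' (Ideal.mul_mem_left _ _ (binomial_mem k hm'phi.symm))

end Poly

end ToricAux

/-- The toric ideal `I_{𝒢ₙ}` is generated by the binomials
`xᵢ yᵢ z_j − zᵢ x_j y_j` for `1 ≤ i < j ≤ n`. -/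
theorem stmt_0 (n : ℕ) (hn : 2 ≤ n) (k : Type*) [Field k] :
    RingHom.ker (piMap n k).toRingHom =
      Ideal.span {f : MvPolynomial (EdgeVar n) k | ∃ i j : Fin n, i < j ∧
        f = X (i, 0) * X (i, 1) * X (j, 2) - X (i, 2) * X (j, 0) * X (j, 1)} := by
  apply le_antisymm
  · intro p hp
    rw [RingHom.mem_ker] at hp
    exact ToricAux.ker_le k p.support.card p le_rfl hp
  · rw [Ideal.span_le]
    rintro f ⟨i, j, hij, rfl⟩
    rw [SetLike.mem_coe, RingHom.mem_ker]
    show piMap n k _ = 0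
    rw [map_sub, map_mul, map_mul, map_mul, map_mul, ToricAux.pi_X, ToricAux.pi_X,
      ToricAux.pi_X, ToricAux.pi_X, ToricAux.pi_X, ToricAux.pi_X,
      monomial_mul, monomial_mul, monomial_mul, monomial_mul, sub_eq_zero]
    congr 1
    · have e1 : ToricAux.eps n ((i, 0) : EdgeVar n) =
          Finsupp.single none 1 + Finsupp.single (some (i, 0)) 1 := rfl
      have e2 : ToricAux.eps n ((i, 1) : EdgeVar n) =
          Finsupp.single none 1 + Finsupp.single (some (i, 1)) 1 := rfl
      have e3 : ToricAux.eps n ((j, 2) : EdgeVar n) =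
          Finsupp.single (some (j, 0)) 1 + Finsupp.single (some (j, 1)) 1 := rfl
      have e4 : ToricAux.eps n ((i, 2) : EdgeVar n) =
          Finsupp.single (some (i, 0)) 1 + Finsupp.single (some (i, 1)) 1 := rfl
      have e5 : ToricAux.eps n ((j, 0) : EdgeVar n) =
          Finsupp.single none 1 + Finsupp.single (some (j, 0)) 1 := rfl
      have e6 : ToricAux.eps n ((j, 1) : EdgeVar n) =
          Finsupp.single none 1 + Finsupp.single (some (j, 1)) 1 := rfl
      rw [e1, e2, e3, e4, e5, e6]
      abel
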